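/- Let m ≥ 0 and p ≥ 1, q ≥ 0 be integers with p + q = m + 1, and define f : ℂ^m → ℝ by f(w) = 1 + Σ_{i=1}^{p-1} |w_i|² − Σ_{i=p}^{m} |w_i|². For every measurable subset B of {w ∈ ℂ^m : f(w) > 0}, the Lebesgue measure (on ℂ^{m+1} ≅ ℝ^{2m+2}) of the set {λ·(1, w₁, …, w_m) : w ∈ B, λ ∈ ℂ, 0 < |λ|²·f(w) < 1} equals (π/(m+1)) · ∫_B f(w)^{−(m+1)} dw, where dw denotes Lebesgue measure on ℂ^m ≅ ℝ^{2m}. -/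

import Mathlib

open MeasureTheory Complex Set
open scoped ENNReal

lemma det_lmul (l : ℂ) : LinearMap.det (Algebra.lmul ℝ ℂ l) = Complex.normSq l := by
  rw [← Algebra.norm_apply, Algebra.norm_complex_apply]

lemma volume_preimage_mul {l : ℂ} (hl : l ≠ 0) (s : Set ℂ) :
    volume ((fun z => l * z) ⁻¹' s) = ENNReal.ofReal ((Complex.normSq l)⁻¹) * volume s := by
  have hd : LinearMap.det (Algebra.lmul ℝ ℂ l) ≠ 0 := by
    rw [det_lmul]; exact fun h => hl (by simpa using Complex.normSq_eq_zero.mp h)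
  have h := Measure.addHaar_preimage_linearMap (volume : Measure ℂ) (f := Algebra.lmul ℝ ℂ l) hd s
  have h2 : ⇑(Algebra.lmul ℝ ℂ l) = fun z => l * z := rfl
  rw [h2, det_lmul] at h
  rwa [_root_.abs_of_nonneg (inv_nonneg.mpr (Complex.normSq_nonneg l))] at h

lemma volume_map_smul {l : ℂ} (hl : l ≠ 0) (n : ℕ) :
    Measure.map (fun w : Fin n → ℂ => l • w) volume
      = (ENNReal.ofReal ((Complex.normSq l)⁻¹)) ^ n • volume := by
  have hmeas : Measurable (fun w : Fin n → ℂ => l • w) :=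
    measurable_pi_lambda _ fun i => (measurable_pi_apply i).const_smul l
  have hsq : (0:ℝ) < Complex.normSq l := Complex.normSq_pos.mpr hl
  set c : ℝ≥0∞ := ENNReal.ofReal (Complex.normSq l) with hc
  have hc0 : c ≠ 0 := by simp [hc, ENNReal.ofReal_eq_zero, not_le, hsq]
  have hctop : c ≠ ⊤ := ENNReal.ofReal_ne_top
  have hcinv : ENNReal.ofReal ((Complex.normSq l)⁻¹) = c⁻¹ :=
    ENNReal.ofReal_inv_of_pos hsq
  have key : (volume : Measure (Fin n → ℂ)) = c ^ n • Measure.map (fun w : Fin n → ℂ => l • w) volume := by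
    rw [show ((volume : Measure (Fin n → ℂ))) = Measure.pi (fun _ => volume) from rfl]
    refine Measure.pi_eq (fun s hs => ?_)
    rw [Measure.smul_apply, smul_eq_mul, Measure.map_apply hmeas (MeasurableSet.univ_pi hs)]
    have hpre : (fun w : Fin n → ℂ => l • w) ⁻¹' (Set.pi Set.univ s)
        = Set.pi Set.univ (fun i => (fun z => l * z) ⁻¹' s i) := by
      ext w; simp [Set.mem_pi, Pi.smul_apply, smul_eq_mul]
    rw [hpre, Measure.pi_pi]
    simp_rw [volume_preimage_mul hl, hcinv]
    rw [Finset.prod_mul_distrib, Finset.prod_const, ← mul_assoc,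
      Finset.card_univ, Fintype.card_fin, ← mul_pow, ENNReal.mul_inv_cancel hc0 hctop]
    simp
  rw [hcinv]
  have hone : c⁻¹ ^ n * c ^ n = 1 := by
    rw [← mul_pow, ENNReal.inv_mul_cancel hc0 hctop, one_pow]
  calc Measure.map (fun w : Fin n → ℂ => l • w) volume
      = (c⁻¹ ^ n * c ^ n) • Measure.map (fun w : Fin n → ℂ => l • w) volume := by
        rw [hone, one_smul]
    _ = c⁻¹ ^ n • (c ^ n • Measure.map (fun w : Fin n → ℂ => l • w) volume) := by
        rw [smul_smul]
    _ = c⁻¹ ^ n • volume := by rw [← key]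

lemma volume_preimage_smul {l : ℂ} (hl : l ≠ 0) {n : ℕ} (A : Set (Fin n → ℂ))
    (hA : MeasurableSet A) :
    volume ((fun w : Fin n → ℂ => l • w) ⁻¹' A)
      = (ENNReal.ofReal ((Complex.normSq l)⁻¹)) ^ n * volume A := by
  have hmeas : Measurable (fun w : Fin n → ℂ => l • w) :=
    measurable_pi_lambda _ fun i => (measurable_pi_apply i).const_smul l
  rw [← Measure.map_apply hmeas hA, volume_map_smul hl, Measure.smul_apply, smul_eq_mul]

lemma lintegral_ball_normSq_pow (n : ℕ) {R : ℝ} (hR : 0 < R) :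
    ∫⁻ z : ℂ in Metric.ball 0 R \ {0}, ENNReal.ofReal (Complex.normSq z ^ n)
      = ENNReal.ofReal (Real.pi / (n + 1) * R ^ (2 * (n + 1))) := by
  set D : Set ℂ := Metric.ball 0 R \ {0} with hD
  have hDmeas : MeasurableSet D := measurableSet_ball.diff (measurableSet_singleton 0)
  have hmem : ∀ z : ℂ, z ∈ D ↔ ‖z‖ ∈ Ioo 0 R := by
    intro z
    simp [hD, Metric.mem_ball, dist_zero_right, norm_pos_iff, and_comm]
  set g : ℝ → ℝ := (Ioo 0 R).indicator (fun y => y ^ (2 * n)) with hg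
  have hgz : ∀ z : ℂ, D.indicator (fun z => Complex.normSq z ^ n) z = g ‖z‖ := by
    intro z
    by_cases hz : z ∈ D
    · rw [Set.indicator_of_mem hz, hg, Set.indicator_of_mem ((hmem z).mp hz)]
      rw [Complex.normSq_eq_norm_sq, ← pow_mul, mul_comm 2 n, mul_comm n 2]
    · rw [Set.indicator_of_notMem hz, hg,
        Set.indicator_of_notMem (fun h => hz ((hmem z).mpr h))]
  have hint : Integrable (fun z : ℂ => g ‖z‖) := by
    have h1 : IntegrableOn (fun z : ℂ => ‖z‖ ^ (2 * n)) (Metric.closedBall 0 R) :=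
      (continuous_norm.pow _).continuousOn.integrableOn_compact (isCompact_closedBall 0 R)
    have h2 : IntegrableOn (fun z : ℂ => ‖z‖ ^ (2 * n)) D :=
      h1.mono_set ((Set.diff_subset).trans Metric.ball_subset_closedBall)
    have : (fun z : ℂ => g ‖z‖) = D.indicator (fun z => ‖z‖ ^ (2 * n)) := by
      funext z
      by_cases hz : z ∈ D
      · rw [Set.indicator_of_mem hz, hg, Set.indicator_of_mem ((hmem z).mp hz)]
      · rw [Set.indicator_of_notMem hz, hg,
          Set.indicator_of_notMem (fun h => hz ((hmem z).mpr h))]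
    rw [this, integrable_indicator_iff hDmeas]
    exact h2
  have hnn : 0 ≤ᵐ[volume] fun z : ℂ => g ‖z‖ := by
    filter_upwards with z
    exact Set.indicator_nonneg (fun y hy => pow_nonneg hy.1.le _) _
  calc ∫⁻ z : ℂ in D, ENNReal.ofReal (Complex.normSq z ^ n)
      = ∫⁻ z : ℂ, ENNReal.ofReal (g ‖z‖) := by
        have heq : ∀ z : ℂ, ENNReal.ofReal (g ‖z‖)
            = D.indicator (fun z => ENNReal.ofReal (Complex.normSq z ^ n)) z := by
          intro z
          rw [← hgz z]
          by_cases hz : z ∈ D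
          · rw [Set.indicator_of_mem hz, Set.indicator_of_mem hz]
          · rw [Set.indicator_of_notMem hz, Set.indicator_of_notMem hz, ENNReal.ofReal_zero]
        simp_rw [heq]
        exact (lintegral_indicator hDmeas _).symm
    _ = ENNReal.ofReal (∫ z : ℂ, g ‖z‖) := (ofReal_integral_eq_lintegral_ofReal hint hnn).symm
    _ = ENNReal.ofReal (Real.pi / (n + 1) * R ^ (2 * (n + 1))) := by
        congr 1
        rw [integral_fun_norm_addHaar (volume : Measure ℂ) g]
        rw [finrank_real_complex]
        have hball : volume.real (Metric.ball (0:ℂ) 1) = Real.pi := by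
          rw [measureReal_def, Complex.volume_ball]
          simp [ENNReal.toReal_mul]
        rw [hball]
        have : ∫ y in Ioi (0:ℝ), y ^ (2 - 1) • g y = ∫ y in Ioo (0:ℝ) R, y ^ (2 * n + 1) := by
          rw [show (2 - 1 : ℕ) = 1 from rfl]
          have : ∀ y : ℝ, y ^ 1 • g y = (Ioo 0 R).indicator (fun y => y ^ (2 * n + 1)) y := by
            intro y
            by_cases hy : y ∈ Ioo 0 R
            · simp [hg, Set.indicator_of_mem hy, pow_succ, smul_eq_mul]; ring
            · simp [hg, Set.indicator_of_notMem hy]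
          simp_rw [this]
          rw [integral_indicator measurableSet_Ioo, Measure.restrict_restrict measurableSet_Ioo]
          congr 1
          rw [Set.Ioo_inter_Ioi]
          simp
        rw [this]
        have : ∫ y in Ioo (0:ℝ) R, y ^ (2 * n + 1) = R ^ (2 * n + 2) / (2 * n + 2) := by
          rw [Measure.restrict_congr_set Ioo_ae_eq_Ioc, ← intervalIntegral.integral_of_le hR.le,
            integral_pow]
          push_cast
          ring
        rw [this]
        rw [nsmul_eq_mul, smul_eq_mul]
        have h1 : ((n:ℝ) + 1) ≠ 0 := by positivity
        have h2 : (2 * (n:ℝ) + 2) ≠ 0 := by positivity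
        rw [show 2 * (n + 1) = 2 * n + 2 by ring]
        push_cast
        field_simp

/-- Volume of the cone over `B` intersected with `{0 < h < 1}` for the Hermitian
form of signature `(p, q)` on `ℂ^{m+1}` in the affine chart `[1 : w₁ : ⋯ : w_m]`. -/
theorem cone_volume_eq (m p q : ℕ) (hp : 1 ≤ p) (hpq : p + q = m + 1)
    (f : (Fin m → ℂ) → ℝ)
    (hf : ∀ w, f w =
      1 + ∑ i : Fin m, (if (i : ℕ) + 1 < p then (1 : ℝ) else -1) * ‖(w i)‖ ^ 2)
    (B : Set (Fin m → ℂ)) (hB : MeasurableSet B) (hBpos : ∀ w ∈ B, 0 < f w) :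
    volume {z : Fin (m + 1) → ℂ | ∃ w ∈ B, ∃ l : ℂ,
        0 < ‖l‖ ^ 2 * f w ∧ ‖l‖ ^ 2 * f w < 1 ∧
        z = l • (Fin.cons 1 w : Fin (m + 1) → ℂ)} =
      ENNReal.ofReal (Real.pi / (m + 1)) *
        ∫⁻ w in B, ENNReal.ofReal ((f w ^ (m + 1))⁻¹) := by
  -- continuity of f
  have hfc : Continuous f := by
    have : f = fun w => 1 + ∑ i : Fin m,
        (if (i : ℕ) + 1 < p then (1 : ℝ) else -1) * ‖(w i)‖ ^ 2 := funext hf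
    rw [this]
    exact continuous_const.add (continuous_finset_sum _ fun i _ =>
      continuous_const.mul ((continuous_norm.comp (continuous_apply i)).pow 2))
  -- the sliced description of the cone
  set T : Set (Fin (m + 1) → ℂ) := {z | ∃ w ∈ B, ∃ l : ℂ,
      0 < ‖l‖ ^ 2 * f w ∧ ‖l‖ ^ 2 * f w < 1 ∧
      z = l • (Fin.cons 1 w : Fin (m + 1) → ℂ)} with hT
  set T' : Set (ℂ × (Fin m → ℂ)) := {pp | pp.1 ≠ 0 ∧ pp.1⁻¹ • pp.2 ∈ B ∧
      ‖pp.1‖ ^ 2 * f (pp.1⁻¹ • pp.2) < 1} with hT'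
  have hg : Measurable (fun pp : ℂ × (Fin m → ℂ) => pp.1⁻¹ • pp.2) := by
    apply measurable_pi_lambda
    intro i
    exact (measurable_fst.inv).mul ((measurable_pi_apply i).comp measurable_snd)
  have hmul : Measurable (fun pp : ℂ × (Fin m → ℂ) =>
      ‖pp.1‖ ^ 2 * f (pp.1⁻¹ • pp.2)) :=
    ((continuous_norm.measurable.comp measurable_fst).pow_const 2).mul (hfc.measurable.comp hg)
  have hT'meas : MeasurableSet T' := by
    have hsplit : T' = ({pp : ℂ × (Fin m → ℂ) | pp.1 ≠ 0}
        ∩ ((fun pp : ℂ × (Fin m → ℂ) => pp.1⁻¹ • pp.2) ⁻¹' B))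
        ∩ {pp : ℂ × (Fin m → ℂ) | ‖pp.1‖ ^ 2 * f (pp.1⁻¹ • pp.2) < 1} := by
      ext pp; simp [hT', Set.mem_setOf_eq, and_assoc]
    rw [hsplit]
    exact ((measurable_fst (measurableSet_singleton 0).compl).inter (hg hB)).inter
      (measurableSet_lt hmul measurable_const)
  -- T is the preimage of T' under the measure-preserving equivalence
  have e := MeasurableEquiv.piFinSuccAbove (fun _ : Fin (m + 1) => ℂ) 0
  have hTeq : T = (MeasurableEquiv.piFinSuccAbove (fun _ : Fin (m + 1) => ℂ) 0) ⁻¹' T' := by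
    ext z
    have happ : (MeasurableEquiv.piFinSuccAbove (fun _ : Fin (m + 1) => ℂ) 0) z
        = (z 0, fun j => z (Fin.succAbove 0 j)) := rfl
    constructor
    · rintro ⟨w, hw, l, hpos, hlt, rfl⟩
      have hl : l ≠ 0 := by
        rintro rfl
        simp at hpos
      have h0 : (l • (Fin.cons 1 w : Fin (m + 1) → ℂ)) 0 = l := by
        simp [Pi.smul_apply, Fin.cons_zero]
      have htail : (fun j : Fin m => (l • (Fin.cons 1 w : Fin (m + 1) → ℂ)) (Fin.succAbove 0 j))
          = l • w := by
        funext j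
        simp [Pi.smul_apply, Fin.zero_succAbove, Fin.cons_succ]
      simp only [Set.mem_preimage, happ, hT', Set.mem_setOf_eq, h0, htail]
      refine ⟨hl, ?_, ?_⟩
      · have : l⁻¹ • l • w = w := by rw [smul_smul, inv_mul_cancel₀ hl, one_smul]
        rw [this]; exact hw
      · have : l⁻¹ • l • w = w := by rw [smul_smul, inv_mul_cancel₀ hl, one_smul]
        rw [this]; exact hlt
    · intro hz
      simp only [Set.mem_preimage, happ, hT', Set.mem_setOf_eq] at hz
      obtain ⟨hl, hmem, hlt⟩ := hz
      refine ⟨(z 0)⁻¹ • (fun j => z (Fin.succAbove 0 j)), hmem, z 0, ?_, hlt, ?_⟩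
      · have := hBpos _ hmem
        have habs : 0 < ‖(z 0)‖ := by
          simpa [norm_pos_iff] using hl
        positivity
      · funext i
        refine Fin.cases ?_ ?_ i
        · simp [Pi.smul_apply, Fin.cons_zero]
        · intro j
          have hsa : Fin.succAbove (0 : Fin (m+1)) j = j.succ := by
            simp [Fin.zero_succAbove]
          rw [Pi.smul_apply, Fin.cons_succ, Pi.smul_apply, smul_eq_mul, smul_eq_mul,
            ← mul_assoc, mul_inv_cancel₀ hl, one_mul, hsa]
  have hpres : MeasurePreserving (MeasurableEquiv.piFinSuccAbove (fun _ : Fin (m + 1) => ℂ) 0)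
      volume volume := volume_preserving_piFinSuccAbove (fun _ : Fin (m + 1) => ℂ) 0
  have hvolT : volume T = volume T' := by
    rw [hTeq]
    exact hpres.measure_preimage hT'meas.nullMeasurableSet
  rw [hvolT]
  -- the 2D slice set and the sliced integrand
  set S' : Set (ℂ × (Fin m → ℂ)) := {pp | pp.2 ∈ B ∧ 0 < ‖pp.1‖ ^ 2 * f pp.2 ∧
      ‖pp.1‖ ^ 2 * f pp.2 < 1} with hS'
  have habsf : Measurable (fun pp : ℂ × (Fin m → ℂ) => ‖pp.1‖ ^ 2 * f pp.2) :=
    ((continuous_norm.measurable.comp measurable_fst).pow_const 2).mul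
      (hfc.measurable.comp measurable_snd)
  have hS'meas : MeasurableSet S' := by
    have hsplit : S' = ((Prod.snd ⁻¹' B)
        ∩ {pp : ℂ × (Fin m → ℂ) | 0 < ‖pp.1‖ ^ 2 * f pp.2})
        ∩ {pp : ℂ × (Fin m → ℂ) | ‖pp.1‖ ^ 2 * f pp.2 < 1} := by
      ext pp; simp [hS', Set.mem_setOf_eq, and_assoc]
    rw [hsplit]
    exact ((measurable_snd hB).inter (measurableSet_lt measurable_const habsf)).inter
      (measurableSet_lt habsf measurable_const)
  set F : ℂ × (Fin m → ℂ) → ℝ≥0∞ := fun pp =>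
    ENNReal.ofReal (Complex.normSq pp.1 ^ m) * S'.indicator 1 pp with hF
  have hFmeas : Measurable F := by
    apply Measurable.mul
    · exact ENNReal.measurable_ofReal.comp
        (((Complex.continuous_normSq.comp continuous_fst).pow m).measurable)
    · exact measurable_one.indicator hS'meas
  have hprod : (volume : Measure (ℂ × (Fin m → ℂ))) = (volume : Measure ℂ).prod volume := rfl
  -- volume T' = ∫ F
  have hstep1 : volume T' = ∫⁻ pp : ℂ × (Fin m → ℂ), F pp := by
    rw [hprod, Measure.prod_apply hT'meas, lintegral_prod F hFmeas.aemeasurable]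
    apply lintegral_congr
    intro l
    by_cases hl : l = 0
    · subst hl
      have h1 : Prod.mk (0:ℂ) ⁻¹' T' = ∅ := by
        ext w; simp [hT']
      have h2 : ∀ w : Fin m → ℂ, F ((0:ℂ), w) = 0 := by
        intro w
        have hns : ((0:ℂ), w) ∉ S' := by
          intro hmem
          obtain ⟨-, h2, -⟩ := hmem
          simp at h2
        simp only [hF, Set.indicator_of_notMem hns, mul_zero]
      simp [h1, h2]
    · -- nonzero slice
      have hA : MeasurableSet (B ∩ {w : Fin m → ℂ | ‖l‖ ^ 2 * f w < 1}) :=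
        hB.inter (measurableSet_lt (measurable_const.mul hfc.measurable) measurable_const)
      have hpre : Prod.mk l ⁻¹' T'
          = (fun w : Fin m → ℂ => l⁻¹ • w) ⁻¹'
            (B ∩ {w : Fin m → ℂ | ‖l‖ ^ 2 * f w < 1}) := by
        ext w
        simp [hT', Set.mem_setOf_eq, hl, and_assoc]
      have hsetA : {w : Fin m → ℂ | (l, w) ∈ S'}
          = B ∩ {w : Fin m → ℂ | ‖l‖ ^ 2 * f w < 1} := by
        ext w
        simp only [hS', Set.mem_setOf_eq, Set.mem_inter_iff]
        constructor
        · rintro ⟨h1, _, h3⟩; exact ⟨h1, h3⟩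
        · rintro ⟨h1, h3⟩
          refine ⟨h1, ?_, h3⟩
          have habs : 0 < ‖l‖ := by simpa [norm_pos_iff] using hl
          have := hBpos _ h1
          positivity
      have hnsq : Complex.normSq l⁻¹ = (Complex.normSq l)⁻¹ := map_inv₀ Complex.normSq l
      have hcalc : volume (Prod.mk l ⁻¹' T')
          = ENNReal.ofReal (Complex.normSq l ^ m)
            * volume (B ∩ {w : Fin m → ℂ | ‖l‖ ^ 2 * f w < 1}) := by
        rw [hpre, volume_preimage_smul (inv_ne_zero hl) _ hA, hnsq, inv_inv,
          ← ENNReal.ofReal_pow (Complex.normSq_nonneg l)]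
      rw [hcalc]
      have hFl : ∀ w : Fin m → ℂ, F (l, w)
          = ENNReal.ofReal (Complex.normSq l ^ m)
            * ({w : Fin m → ℂ | (l, w) ∈ S'}).indicator 1 w := by
        intro w
        by_cases hw : (l, w) ∈ S'
        · simp only [hF, Set.indicator_of_mem hw,
            Set.indicator_of_mem (show w ∈ {w : Fin m → ℂ | (l, w) ∈ S'} from hw)]
          rfl
        · simp only [hF, Set.indicator_of_notMem hw,
            Set.indicator_of_notMem (show w ∉ {w : Fin m → ℂ | (l, w) ∈ S'} from hw)]
      simp_rw [hFl]
      rw [lintegral_const_mul _ (measurable_one.indicator (by rw [hsetA]; exact hA)),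
        lintegral_indicator_one (by rw [hsetA]; exact hA), hsetA]
  rw [hstep1, hprod, lintegral_prod_symm F hFmeas.aemeasurable]
  -- inner integral over l for fixed w
  have hinner : ∀ w : Fin m → ℂ, (∫⁻ l : ℂ, F (l, w))
      = B.indicator (fun w => ENNReal.ofReal (Real.pi / (m + 1))
          * ENNReal.ofReal ((f w ^ (m + 1))⁻¹)) w := by
    intro w
    by_cases hw : w ∈ B
    · rw [Set.indicator_of_mem hw]
      have hc : 0 < f w := hBpos _ hw
      set R : ℝ := Real.sqrt (f w)⁻¹ with hRdef
      have hR : 0 < R := Real.sqrt_pos.mpr (by positivity)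
      have hsetl : ∀ l : ℂ, ((l, w) ∈ S') ↔ l ∈ Metric.ball (0:ℂ) R \ {0} := by
        intro l
        simp only [hS', Set.mem_setOf_eq, Set.mem_diff, Metric.mem_ball, dist_zero_right,
          Set.mem_singleton_iff]
        constructor
        · rintro ⟨_, h2, h3⟩
          have habs : 0 < ‖l‖ := by
            by_contra hcon
            push_neg at hcon
            have : ‖l‖ = 0 := le_antisymm hcon (norm_nonneg l)
            rw [this] at h2; simp at h2
          constructor
          · rw [hRdef, Real.lt_sqrt (norm_nonneg l), inv_eq_one_div]
            exact (lt_div_iff₀ hc).mpr h3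
          · exact fun h => by simp [h] at habs
        · rintro ⟨h1, h2⟩
          have habs : 0 < ‖l‖ := by simpa [norm_pos_iff] using h2
          refine ⟨hw, by positivity, ?_⟩
          have hsq : ‖l‖ ^ 2 < (f w)⁻¹ := by
            rw [← Real.lt_sqrt (norm_nonneg l)]
            exact h1
          calc ‖l‖ ^ 2 * f w < (f w)⁻¹ * f w := by
                exact mul_lt_mul_of_pos_right hsq hc
            _ = 1 := inv_mul_cancel₀ (ne_of_gt hc)
      have hFind : ∀ l : ℂ, F (l, w)
          = (Metric.ball (0:ℂ) R \ {0}).indicator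
              (fun l => ENNReal.ofReal (Complex.normSq l ^ m)) l := by
        intro l
        by_cases hmem : (l, w) ∈ S'
        · simp only [hF, Set.indicator_of_mem hmem,
            Set.indicator_of_mem ((hsetl l).mp hmem)]
          simp
        · simp only [hF, Set.indicator_of_notMem hmem,
            Set.indicator_of_notMem (fun h => hmem ((hsetl l).mpr h))]
          simp
      simp_rw [hFind]
      rw [lintegral_indicator (measurableSet_ball.diff (measurableSet_singleton 0)),
        lintegral_ball_normSq_pow m hR]
      have hRpow : R ^ (2 * (m + 1)) = (f w ^ (m + 1))⁻¹ := by
        rw [pow_mul, hRdef, Real.sq_sqrt (by positivity), ← inv_pow]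
      rw [hRpow, ENNReal.ofReal_mul (by positivity)]
    · rw [Set.indicator_of_notMem hw]
      have hz : ∀ l : ℂ, F (l, w) = 0 := by
        intro l
        simp only [hF, Set.indicator_of_notMem
          (show (l, w) ∉ S' from fun h => hw h.1), mul_zero]
      simp [hz]
  simp_rw [hinner]
  rw [lintegral_indicator hB]
  have hm2 : Measurable fun w : Fin m → ℂ => ENNReal.ofReal ((f w ^ (m + 1))⁻¹) :=
    ENNReal.measurable_ofReal.comp ((hfc.pow (m + 1)).measurable.inv)
  rw [lintegral_const_mul _ hm2]
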